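/- arXiv:2302.02772 — 3 statements merged into one kernel-verified Lean document; each statement's English description precedes it below -/
import Mathlib

section
/- If δ(A) = δ(A⊥) = 2, then A is bimorphic with the 2-ladder, i.e., there exist Tukey morphisms in both directions between A and the 2-ladder. -/
/-!
A Tukey morphism from the `ι`-ladder `(ι, ι, =)` to `A` is exactly a dominating family `ι → A₊`,
so `δ(A) ≤ 2` gives a morphism from the 2-ladder to `A`. Dually, `δ(A⊥) ≤ 2` gives a morphism
from the 2-ladder to `A⊥`, hence one from `A` to the dual of the 2-ladder; the latter is again a
2-ladder, namely the graph of `Fin.rev`.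
-/

section Tukey

variable {Am Ap Bm Bp Cm Cp : Type*}

def IsTukeyMorphism (A : Am → Ap → Prop) (B : Bm → Bp → Prop) (φm : Bm → Am) (φp : Ap → Bp) :
    Prop :=
  ∀ b a, A (φm b) a → B b (φp a)

def dualRel (A : Am → Ap → Prop) : Ap → Am → Prop := fun y x => ¬ A x y

theorem IsTukeyMorphism.comp {A : Am → Ap → Prop} {B : Bm → Bp → Prop} {C : Cm → Cp → Prop}
    {φm : Bm → Am} {φp : Ap → Bp} {ψm : Cm → Bm} {ψp : Bp → Cp}
    (hφ : IsTukeyMorphism A B φm φp) (hψ : IsTukeyMorphism B C ψm ψp) :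
    IsTukeyMorphism A C (φm ∘ ψm) (ψp ∘ φp) :=
  fun c a h => hψ c (φp a) (hφ (ψm c) a h)

theorem isTukeyMorphism_dualRel_iff {A : Am → Ap → Prop} {B : Bm → Bp → Prop}
    {φm : Bm → Am} {φp : Ap → Bp} :
    IsTukeyMorphism (dualRel B) (dualRel A) φp φm ↔ IsTukeyMorphism A B φm φp :=
  ⟨fun h b a => not_imp_not.mp (h a b), fun h a b => mt (h b a)⟩

theorem exists_isTukeyMorphism_eq_of_dominating {ι : Type*} {A : Am → Ap → Prop} (y : ι → Ap)
    (hy : ∀ x, ∃ i, A x (y i)) : ∃ ψm : Am → ι, IsTukeyMorphism (· = ·) A ψm y := by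
  choose ψm hψm using hy
  exact ⟨ψm, by rintro x _ rfl; exact hψm x⟩

theorem isTukeyMorphism_dualRel_eq_fin_two :
    IsTukeyMorphism (dualRel (· = · : Fin 2 → Fin 2 → Prop)) (· = ·) Fin.rev id := by
  unfold IsTukeyMorphism dualRel
  decide

end Tukey

theorem bimorphic_two_ladder_general {Am Ap : Type*} (A : Am → Ap → Prop)
    (hd2 : ∃ y₁ y₂ : Ap, ∀ x, A x y₁ ∨ A x y₂)
    (hdd2 : ∃ x₁ x₂ : Am, ∀ y, ¬ A x₁ y ∨ ¬ A x₂ y) :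
    (∃ (φm : Fin 2 → Am) (φp : Ap → Fin 2),
      ∀ (b : Fin 2) (a : Ap), A (φm b) a → b = φp a) ∧
    (∃ (ψm : Am → Fin 2) (ψp : Fin 2 → Ap),
      ∀ (b : Am) (a : Fin 2), ψm b = a → A b (ψp a)) := by
  obtain ⟨y₁, y₂, hy⟩ := hd2
  obtain ⟨x₁, x₂, hx⟩ := hdd2
  obtain ⟨ψm, hψ⟩ := exists_isTukeyMorphism_eq_of_dominating ![y₁, y₂]
    (fun x => by simpa [Fin.exists_fin_two] using hy x)
  obtain ⟨φp, hφ⟩ := exists_isTukeyMorphism_eq_of_dominating (A := dualRel A) ![x₁, x₂]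
    (fun y => by simpa [Fin.exists_fin_two, dualRel] using hx y)
  have hA : IsTukeyMorphism A (· = ·) ![x₁, x₂] (Fin.rev ∘ φp) :=
    isTukeyMorphism_dualRel_iff.mp (isTukeyMorphism_dualRel_eq_fin_two.comp hφ)
  exact ⟨⟨_, _, hA⟩, ⟨ψm, _, hψ⟩⟩

/-- If δ(A) = δ(A⊥) = 2, then A is bimorphic with the 2-ladder. -/
theorem bimorphic_two_ladder {Am Ap : Type*} (A : Am → Ap → Prop)
    (hd2 : ∃ y₁ y₂ : Ap, ∀ x, A x y₁ ∨ A x y₂)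
    (hd1 : ¬ ∃ y₀ : Ap, ∀ x, A x y₀)
    (hdd2 : ∃ x₁ x₂ : Am, ∀ y, ¬ A x₁ y ∨ ¬ A x₂ y)
    (hdd1 : ¬ ∃ x₀ : Am, ∀ y, ¬ A x₀ y) :
    (∃ (φm : Fin 2 → Am) (φp : Ap → Fin 2),
      ∀ (b : Fin 2) (a : Ap), A (φm b) a → b = φp a) ∧
    (∃ (ψm : Am → Fin 2) (ψp : Fin 2 → Ap),
      ∀ (b : Am) (a : Fin 2), ψm b = a → A b (ψp a)) :=
  bimorphic_two_ladder_general A hd2 hdd2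
end

section
/- Suppose A' is obtained from a binary relation A by deleting a point c ∈ A₋ which is non-minimal (there exists c' ∈ A₋, c' ≠ c, with N(c') ⊊ N(c)) or has a twin (there exists c' ≠ c with N(c') = N(c)). Then A and A' are bimorphic. -/
section
variable {Am Ap : Type*}

open Classical in
noncomputable def mergeInto (c c' : Am) (hne : c' ≠ c) (b : Am) : {x : Am // x ≠ c} :=
  if hb : b = c then ⟨c', hne⟩ else ⟨b, hb⟩

theorem rel_of_rel_mergeInto (A : Am → Ap → Prop) {c c' : Am} (hne : c' ≠ c)
    (hsub : {a | A c' a} ⊆ {a | A c a}) {b : Am} {a : Ap}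
    (h : A (mergeInto c c' hne b) a) : A b a := by
  unfold mergeInto at h
  split_ifs at h with hb
  · subst hb
    exact hsub h
  · exact h

end

/-- Deleting a non-minimal point of A₋, or a point with a twin, yields a
relation bimorphic to A. -/
theorem bimorphic_delete_point {Am Ap : Type*} (A : Am → Ap → Prop) (c : Am)
    (h : ∃ c' : Am, c' ≠ c ∧
      ({b | A c' b} ⊂ {b | A c b} ∨ {b | A c' b} = {b | A c b})) :
    (∃ (φm : {x : Am // x ≠ c} → Am) (φp : Ap → Ap),
      ∀ (b : {x : Am // x ≠ c}) (a : Ap), A (φm b) a → A (b : Am) (φp a)) ∧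
    (∃ (ψm : Am → {x : Am // x ≠ c}) (ψp : Ap → Ap),
      ∀ (b : Am) (a : Ap), A ((ψm b : {x : Am // x ≠ c}) : Am) a → A b (ψp a)) := by
  obtain ⟨c', hne, hc'⟩ := h
  have hsub : {b | A c' b} ⊆ {b | A c b} := le_iff_lt_or_eq.mpr hc'
  exact ⟨⟨Subtype.val, id, fun _ _ => id⟩,
    ⟨mergeInto c c' hne, id, fun _ _ => rel_of_rel_mergeInto A hne hsub⟩⟩
end

section
/- For each n ≥ 2 there exists a finite binary relation C_n with |C_{n-}| = |C_{n+}| = n! such that δ(C_n) = δ(C_n⊥) = n. -/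
/-!
The upper bounds come from one point in every block column. For the lower bound, let `Y`
dominate `C_{n+1}` with `|Y| ≤ n`. The block columns met by `Y` form a nonempty proper subset
of the cyclically ordered blocks, so some column `i + 1` is met while column `i` is not. The
rows of block row `i` are then covered neither by its `J` block (column `i`) nor by its `O`
block (column `i + 1`), so the points of `Y` outside column `i + 1` — at most `|Y| - 1` of
them — dominate `C_n`, whence `|Y| - 1 ≥ n`. After shifting block rows cyclically by one, the
dual of `C_{n+1}` is the same construction applied to `C_n⊥`, so the argument also gives
`δ(C_{n+1}⊥) = n + 1`.
-/

open Finset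

namespace DominatingNumber

variable {α β α' β' : Type*}

def IsDominating (A : α → β → Prop) (Y : Finset β) : Prop :=
  ∀ x, ∃ y ∈ Y, A x y

def dominatingCards (A : α → β → Prop) : Set ℕ :=
  {k | ∃ Y : Finset β, IsDominating A Y ∧ Y.card = k}

def dual (A : α → β → Prop) : β → α → Prop :=
  fun y x => ¬ A x y

theorem isLeast_dominatingCards_iff {A : α → β → Prop} {n : ℕ} :
    IsLeast (dominatingCards A) n ↔
      (∃ Y, IsDominating A Y ∧ Y.card = n) ∧ ∀ Y, IsDominating A Y → n ≤ Y.card := by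
  refine and_congr Iff.rfl ⟨fun h Y hY => h ⟨Y, hY, rfl⟩, ?_⟩
  rintro h k ⟨Y, hY, rfl⟩
  exact h Y hY

theorem IsDominating.nonempty [Nonempty α] {A : α → β → Prop} {Y : Finset β}
    (hY : IsDominating A Y) : Y.Nonempty :=
  let ⟨y, hy, _⟩ := hY (Classical.arbitrary α)
  ⟨y, hy⟩

theorem IsDominating.map {A : α → β → Prop} {Y : Finset β} (hY : IsDominating A Y)
    (e : α' ≃ α) (f : β ≃ β') :
    IsDominating (fun x y => A (e x) (f.symm y)) (Y.map f.toEmbedding) := by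
  intro x
  obtain ⟨y, hy, hxy⟩ := hY (e x)
  exact ⟨f y, mem_map_of_mem _ hy, by simpa using hxy⟩

theorem dominatingCards_comp_equiv (A : α → β → Prop) (e : α' ≃ α) (f : β' ≃ β) :
    dominatingCards (fun x y => A (e x) (f y)) = dominatingCards A := by
  ext k
  constructor
  · rintro ⟨Y, hY, rfl⟩
    refine ⟨Y.map f.toEmbedding, ?_, card_map _⟩
    simpa using hY.map e.symm f
  · rintro ⟨Y, hY, rfl⟩
    exact ⟨_, hY.map e f.symm, card_map _⟩

open Fin.NatCast in
theorem _root_.Fin.exists_notMem_add_one_mem {m : ℕ} {S : Finset (Fin (m + 1))}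
    (hne : S.Nonempty) (hS : S ≠ univ) : ∃ i ∉ S, i + 1 ∈ S := by
  by_contra! hclosed
  obtain ⟨j, hj⟩ := hne
  obtain ⟨i, hi⟩ : ∃ i, i ∉ S := by simpa [eq_univ_iff_forall] using hS
  have hiter (k : ℕ) : i + k ∉ S := by
    induction k with
    | zero => simpa using hi
    | succ k ih => simpa [add_assoc] using hclosed _ ih
  exact hiter (j - i).val (by simpa using hj)

/-- `p.1` is the block row and `q.1` the block column; addition in `Fin (n + 1)` wraps around,
so the `False` blocks sit cyclically just right of the diagonal. -/
def cyclicBlock (n : ℕ) (A : α → β → Prop) (p : Fin (n + 1) × α) (q : Fin (n + 1) × β) :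
    Prop :=
  q.1 = p.1 ∨ (q.1 ≠ p.1 + 1 ∧ A p.2 q.2)

section cyclicBlock

variable {n : ℕ} {A : α → β → Prop}

theorem isDominating_cyclicBlock_univ_product (y₀ : β) :
    IsDominating (cyclicBlock n A) (univ ×ˢ {y₀}) :=
  fun p => ⟨(p.1, y₀), by simp, Or.inl rfl⟩

theorem IsDominating.lt_card_of_cyclicBlock {Y : Finset (Fin (n + 1) × β)}
    (hY : IsDominating (cyclicBlock n A) Y) (hA : ∀ V, IsDominating A V → n ≤ V.card)
    {i : Fin (n + 1)} (hi : i ∉ Y.image Prod.fst) (hi' : i + 1 ∈ Y.image Prod.fst) :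
    n < Y.card := by
  classical
  set Y' := Y.filter (·.1 ≠ i + 1)
  have hdom : IsDominating A (Y'.image Prod.snd) := by
    intro x
    obtain ⟨q, hq, hxq⟩ := hY (i, x)
    have hqi : q.1 ≠ i := fun h => hi (mem_image.2 ⟨q, hq, h⟩)
    obtain ⟨hq1, hxq⟩ := hxq.resolve_left hqi
    exact ⟨q.2, mem_image_of_mem _ (mem_filter.2 ⟨hq, hq1⟩), hxq⟩
  have hY' : Y' ⊂ Y := by
    obtain ⟨q, hq, hq1⟩ := mem_image.1 hi'
    exact filter_ssubset.2 ⟨q, hq, not_not.2 hq1⟩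
  calc n ≤ (Y'.image Prod.snd).card := hA _ hdom
    _ ≤ Y'.card := card_image_le
    _ < Y.card := card_lt_card hY'

theorem isLeast_dominatingCards_cyclicBlock [Nonempty α]
    (hA : IsLeast (dominatingCards A) n) :
    IsLeast (dominatingCards (cyclicBlock n A)) (n + 1) := by
  rw [isLeast_dominatingCards_iff] at hA ⊢
  obtain ⟨⟨Y₀, hY₀, -⟩, hA⟩ := hA
  obtain ⟨y₀, -⟩ := hY₀.nonempty
  refine ⟨⟨_, isDominating_cyclicBlock_univ_product y₀, by simp⟩, fun Y hY => ?_⟩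
  by_contra! hcard
  have hne : (Y.image Prod.fst).Nonempty := hY.nonempty.image _
  have hnu : Y.image Prod.fst ≠ univ := fun h => by
    simpa [h] using (card_image_le (f := Prod.fst)).trans_lt hcard
  obtain ⟨i, hi, hi'⟩ := Fin.exists_notMem_add_one_mem hne hnu
  have := hY.lt_card_of_cyclicBlock hA hi hi'
  omega

theorem dual_cyclicBlock (hn : n ≠ 0) :
    dual (cyclicBlock n A) = fun x y => cyclicBlock n (dual A) (x.1 - 1, x.2) y := by
  funext x y
  have h10 : (1 : Fin (n + 1)) ≠ 0 := by simp [Fin.one_eq_zero_iff, hn]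
  simp only [dual, cyclicBlock]
  grind

theorem isLeast_dominatingCards_dual_cyclicBlock [Nonempty β]
    (hA : IsLeast (dominatingCards (dual A)) n) :
    IsLeast (dominatingCards (dual (cyclicBlock n A))) (n + 1) := by
  have hn : n ≠ 0 := by
    obtain ⟨Y, hY, rfl⟩ := hA.1
    exact hY.nonempty.card_ne_zero
  rw [dual_cyclicBlock hn]
  exact (dominatingCards_comp_equiv (cyclicBlock n (dual A))
    ((Equiv.subRight 1).prodCongr (Equiv.refl β)) (Equiv.refl _)).symm ▸
    isLeast_dominatingCards_cyclicBlock hA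

end cyclicBlock

theorem exists_isLeast_dominatingCards_and_dual (n : ℕ) (hn : 2 ≤ n) :
    ∃ C : Fin n.factorial → Fin n.factorial → Prop,
      IsLeast (dominatingCards C) n ∧ IsLeast (dominatingCards (dual C)) n := by
  induction n, hn using Nat.le_induction with
  | base =>
    refine ⟨fun x y => x = y, ?_, ?_⟩ <;>
    · simp only [isLeast_dominatingCards_iff, IsDominating, dual]
      decide
  | succ n hn ih =>
    obtain ⟨C, hC, hC'⟩ := ih
    have : Nonempty (Fin n.factorial) := ⟨⟨0, n.factorial_pos⟩⟩
    let e : Fin (n + 1) × Fin n.factorial ≃ Fin (n + 1).factorial :=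
      finProdFinEquiv.trans (finCongr (Nat.factorial_succ n).symm)
    refine ⟨fun x y => cyclicBlock n C (e.symm x) (e.symm y), ?_, ?_⟩
    · exact (dominatingCards_comp_equiv _ e.symm e.symm).symm ▸
        isLeast_dominatingCards_cyclicBlock hC
    · exact (dominatingCards_comp_equiv (dual (cyclicBlock n C)) e.symm e.symm).symm ▸
        isLeast_dominatingCards_dual_cyclicBlock hC'

end DominatingNumber

/-- For each n ≥ 2 there is a binary relation on sets of size n! whose
dominating number and dual dominating number both equal n. -/
theorem exists_rel_delta_eq_dual_delta (n : ℕ) (hn : 2 ≤ n) :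
    ∃ C : Fin n.factorial → Fin n.factorial → Prop,
      IsLeast {k | ∃ Y : Finset (Fin n.factorial),
        (∀ x, ∃ y ∈ Y, C x y) ∧ Y.card = k} n ∧
      IsLeast {k | ∃ X : Finset (Fin n.factorial),
        (∀ y, ∃ x ∈ X, ¬ C x y) ∧ X.card = k} n :=
  DominatingNumber.exists_isLeast_dominatingCards_and_dual n hn
end
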